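/- arXiv:1308.3193 — 2 statements merged into one kernel-verified Lean document; each statement's English description precedes it below -/
import Mathlib

section
/- Let A be an n×n doubly nonnegative matrix of rank 3 with A = B^T B where B ∈ ℝ^{3×n}. If B is nonnegative-equivalent (nnq), i.e., B has a nonsingular 3×3 submatrix B_1 with B_1^{-1} B entrywise nonnegative, then A is completely positive with cp-rank(A) = 3. -/
open Matrix BigOperators

def Matrix.IsCP {n : Type*} [Fintype n] (A : Matrix n n ℝ) : Prop :=
  ∃ (m : ℕ) (B : Matrix (Fin m) n ℝ), (∀ i j, 0 ≤ B i j) ∧ A = Bᵀ * B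

noncomputable def Matrix.cpRank {n : Type*} [Fintype n] (A : Matrix n n ℝ) : ℕ :=
  sInf {m | ∃ B : Matrix (Fin m) n ℝ, (∀ i j, 0 ≤ B i j) ∧ A = Bᵀ * B}

def Matrix.IsNNQ {r n : ℕ} (B : Matrix (Fin r) (Fin n) ℝ) : Prop :=
  ∃ s : Fin r → Fin n, IsUnit (B.submatrix id s).det ∧
    ∀ i j, 0 ≤ ((B.submatrix id s)⁻¹ * B) i j

/-!
Write `B = B₁ C` with `C = B₁⁻¹ B ≥ 0`. Then `A = Cᵀ (B₁ᵀ B₁) C`, and `B₁ᵀ B₁` is the principal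
`3 × 3` submatrix of `A` on the columns of `B₁`, hence positive definite and entrywise nonnegative.
Such a matrix `M` has a nonnegative `3 × 3` factor `L` with `M = Lᵀ L`: after possibly swapping the
first two indices we have `M₀₁ M₀₂ ≤ M₀₀ M₁₂` (if both choices failed, multiplying the two failures
would give `M₀₁² ≥ M₀₀ M₁₁`), and this is exactly the condition for the Cholesky factor of `M` to be
nonnegative. So `A = (L C)ᵀ (L C)` with `L C ≥ 0` of size `3 × n`, while every such factorization
has at least `rank A = 3` rows.
-/

lemma mul_le_mul_or_mul_le_mul_of_sq_lt_mul {a b x y z : ℝ} (ha : 0 ≤ a) (hb : 0 ≤ b)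
    (hy : 0 ≤ y) (hz : 0 ≤ z) (hminor : x ^ 2 < a * b) : x * y ≤ a * z ∨ x * z ≤ b * y := by
  by_contra! h
  nlinarith [mul_lt_mul'' h.1 h.2 (by positivity) (by positivity),
    mul_nonneg (mul_nonneg hy hz) (sub_nonneg.2 hminor.le)]

namespace Matrix

variable {n o : Type*}

def HasCPFactorization [Fintype n] (A : Matrix n n ℝ) (m : ℕ) : Prop :=
  ∃ B : Matrix (Fin m) n ℝ, (∀ i j, 0 ≤ B i j) ∧ A = Bᵀ * B

theorem HasCPFactorization.rank_le [Fintype n] {A : Matrix n n ℝ} {m : ℕ}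
    (h : A.HasCPFactorization m) : A.rank ≤ m := by
  obtain ⟨B, -, rfl⟩ := h
  exact (rank_mul_le_right _ _).trans (B.rank_le_card_height.trans_eq (Fintype.card_fin m))

theorem HasCPFactorization.isCP_and_cpRank_eq [Fintype n] {A : Matrix n n ℝ} {m : ℕ}
    (h : A.HasCPFactorization m) (hrank : A.rank = m) : A.IsCP ∧ A.cpRank = m :=
  ⟨⟨m, h⟩, le_antisymm (Nat.sInf_le h)
    (le_csInf ⟨m, h⟩ fun _ hk => hrank ▸ HasCPFactorization.rank_le hk)⟩

theorem HasCPFactorization.of_submatrix [Fintype n] [Fintype o] {A : Matrix n n ℝ} {m : ℕ}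
    (e : o ≃ n) (h : (A.submatrix e e).HasCPFactorization m) : A.HasCPFactorization m := by
  obtain ⟨B, hB, hA⟩ := h
  refine ⟨B.submatrix id e.symm, fun i j => hB _ _, ?_⟩
  ext i j
  simpa [mul_apply] using congr_fun (congr_fun hA (e.symm i)) (e.symm j)

theorem HasCPFactorization.transpose_mul_mul [Fintype n] [Fintype o] {M : Matrix o o ℝ}
    {m : ℕ} (h : M.HasCPFactorization m) {C : Matrix o n ℝ} (hC : ∀ i j, 0 ≤ C i j) :
    (Cᵀ * M * C).HasCPFactorization m := by
  obtain ⟨L, hL, rfl⟩ := h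
  refine ⟨L * C, fun i j => Finset.sum_nonneg fun k _ => mul_nonneg (hL i k) (hC k j), ?_⟩
  simp only [transpose_mul, Matrix.mul_assoc]

theorem PosDef.isSymm [Fintype n] {M : Matrix n n ℝ} (hM : M.PosDef) : M.IsSymm := by
  simpa [IsSymm, IsHermitian, conjTranspose_eq_transpose_of_trivial] using hM.isHermitian

theorem PosDef.sq_apply_lt_mul_diag [Fintype n] {M : Matrix n n ℝ} (hM : M.PosDef) {i j : n}
    (hij : i ≠ j) : M i j ^ 2 < M i i * M j j := by
  classical
  have h2 := (hM.submatrix (e := ![i, j]) fun a b h => by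
    fin_cases a <;> fin_cases b <;> simp_all [eq_comm]).det_pos
  rw [det_fin_two] at h2
  simpa [sq, hM.isSymm.apply i j] using h2

theorem hasCPFactorization_three_of_pivot {a b c x y z : ℝ} (ha : 0 < a) (hx : 0 ≤ x)
    (hy : 0 ≤ y) (hminor : x ^ 2 < a * b)
    (hdet : 0 ≤ (!![a, x, y; x, b, z; y, z, c] : Matrix (Fin 3) (Fin 3) ℝ).det)
    (hpivot : x * y ≤ a * z) :
    (!![a, x, y; x, b, z; y, z, c] : Matrix (Fin 3) (Fin 3) ℝ).HasCPFactorization 3 := by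
  have hd : 0 < a * b - x ^ 2 := sub_pos.2 hminor
  obtain ⟨Δ, hΔ⟩ : ∃ Δ, Δ = a * b * c - a * z ^ 2 - c * x ^ 2 + 2 * x * y * z - b * y ^ 2 :=
    ⟨_, rfl⟩
  replace hdet : 0 ≤ Δ := by simp [det_fin_three] at hdet; linarith
  have hρ2 : √a ^ 2 = a := Real.sq_sqrt ha.le
  have hδ2 : √(a * b - x ^ 2) ^ 2 = a * b - x ^ 2 := Real.sq_sqrt hd.le
  have hu2 : √(Δ / (a * b - x ^ 2)) ^ 2 * (a * b - x ^ 2) = Δ := by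
    rw [Real.sq_sqrt (div_nonneg hdet hd.le), div_mul_cancel₀ _ hd.ne']
  -- the Cholesky factor of the matrix; the square of its last pivot is `det / (a b - x²)`
  refine ⟨!![√a, x / √a, y / √a;
             0, √(a * b - x ^ 2) / √a, (a * z - x * y) / (√a * √(a * b - x ^ 2));
             0, 0, √(Δ / (a * b - x ^ 2))], ?_, ?_⟩
  · intro i j
    fin_cases i <;> fin_cases j <;> simp <;> positivity
  · ext i j
    symm
    fin_cases i <;> fin_cases j <;> simp [mul_apply, Fin.sum_univ_three] <;> field_simp <;>
      simp only [hρ2, hδ2]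
    all_goals first | ring1 | linear_combination a * hu2 + a * hΔ

theorem PosDef.hasCPFactorization_three {M : Matrix (Fin 3) (Fin 3) ℝ} (hM : M.PosDef)
    (hnn : ∀ i j, 0 ≤ M i j) : M.HasCPFactorization 3 := by
  have of_pivot (σ : Equiv.Perm (Fin 3))
      (hpivot : M (σ 0) (σ 1) * M (σ 0) (σ 2) ≤ M (σ 0) (σ 0) * M (σ 1) (σ 2)) :
      M.HasCPFactorization 3 := by
    refine HasCPFactorization.of_submatrix σ ?_
    set N := M.submatrix σ σ
    have hN : N.PosDef := hM.submatrix σ.injective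
    have hNsymm : N = !![N 0 0, N 0 1, N 0 2; N 0 1, N 1 1, N 1 2; N 0 2, N 1 2, N 2 2] := by
      conv_lhs => rw [eta_fin_three N]
      rw [hN.isSymm.apply 0 1, hN.isSymm.apply 0 2, hN.isSymm.apply 1 2]
    rw [hNsymm]
    exact hasCPFactorization_three_of_pivot hN.diag_pos (hnn _ _) (hnn _ _)
      (hN.sq_apply_lt_mul_diag (by decide)) (hNsymm ▸ hN.det_pos.le) hpivot
  rcases mul_le_mul_or_mul_le_mul_of_sq_lt_mul (hnn 0 0) (hnn 1 1) (hnn 0 2) (hnn 1 2)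
    (hM.sq_apply_lt_mul_diag (i := 0) (j := 1) (by decide)) with h | h
  · exact of_pivot 1 h
  · refine of_pivot (Equiv.swap 0 1) ?_
    simpa [hM.isSymm.apply 0 1, Equiv.swap_apply_of_ne_of_ne] using h

end Matrix

theorem stmt_15_general (n : ℕ) (A : Matrix (Fin n) (Fin n) ℝ)
    (hnn : ∀ i j, 0 ≤ A i j) (hrank : A.rank = 3)
    (B : Matrix (Fin 3) (Fin n) ℝ) (hB : A = Bᵀ * B) (hnnq : B.IsNNQ) :
    A.IsCP ∧ A.cpRank = 3 := by
  obtain ⟨s, hdet, hC⟩ := hnnq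
  set B₁ := B.submatrix id s
  have hA₁ : B₁ᵀ * B₁ = A.submatrix s s := by
    rw [hB, submatrix_mul _ _ _ _ _ Function.bijective_id, transpose_submatrix]
  have hpd : (B₁ᵀ * B₁).PosDef := by
    simpa [conjTranspose_eq_transpose_of_trivial] using PosDef.conjTranspose_mul_self B₁
      (mulVec_injective_iff_isUnit.2 ((isUnit_iff_isUnit_det _).2 hdet))
  have hfac := (hpd.hasCPFactorization_three (hA₁ ▸ fun i j => hnn _ _)).transpose_mul_mul hC
  have hcongr : (B₁⁻¹ * B)ᵀ * (B₁ᵀ * B₁) * (B₁⁻¹ * B) = A := by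
    conv_rhs => rw [hB, ← mul_nonsing_inv_cancel_left B₁ B hdet]
    simp only [transpose_mul, Matrix.mul_assoc]
  exact (hcongr ▸ hfac).isCP_and_cpRank_eq hrank

theorem stmt_15 (n : ℕ) (A : Matrix (Fin n) (Fin n) ℝ)
    (hnn : ∀ i j, 0 ≤ A i j) (hpsd : A.PosSemidef) (hrank : A.rank = 3)
    (B : Matrix (Fin 3) (Fin n) ℝ) (hB : A = Bᵀ * B) (hnnq : B.IsNNQ) :
    A.IsCP ∧ A.cpRank = 3 :=
  stmt_15_general n A hnn hrank B hB hnnq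
end

section
/- The 5×5 matrix A = [[3,0,1,1,1],[0,6,1,1,2],[1,1,2,0,0],[1,1,0,2,0],[1,2,0,0,2]] is doubly nonnegative and invertible (det(A) = 4), and it is completely positive with cp-rank exactly 6; in particular its cp-rank strictly exceeds its rank 5. -/
/-!
If `A = Bᵀ B` with `B ≥ 0`, the support of each row of `B` is a clique of the graph `G(A)` of
nonzero off-diagonal entries, and every edge of `G(A)` lies in the support of some row. When
`G(A)` is triangle-free a clique contains at most one edge, so the rows of `B` cover the edges
injectively and `B` has at least `|E(G(A))|` rows. For the matrix at hand `G(A) = K_{2,3}`, which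
is bipartite with six edges, and an explicit factorization with six rows attains the bound.
-/

open Matrix BigOperators

namespace SimpleGraph

variable {V : Type*} {G : SimpleGraph V}

theorem CliqueFree.edge_eq_of_subset_isClique (hG : G.CliqueFree 3) {s : Set V}
    (hs : G.IsClique s) {e e' : Sym2 V} (he : e ∈ G.edgeSet) (he' : e' ∈ G.edgeSet)
    (hes : ∀ v ∈ e, v ∈ s) (hes' : ∀ v ∈ e', v ∈ s) : e = e' := by
  classical
  induction e with | h a b => ?_
  induction e' with | h c d => ?_
  have ha := hes a (Sym2.mem_mk_left a b)
  have hb := hes b (Sym2.mem_mk_right a b)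
  have hab : a ≠ b := G.ne_of_adj he
  have hs_eq : ∀ x ∈ s, x = a ∨ x = b := by
    intro x hx
    by_contra! hxab
    exact hG {a, b, x} (is3Clique_triple_iff.mpr
      ⟨hs ha hb hab, hs ha hx hxab.1.symm, hs hb hx hxab.2.symm⟩)
  rcases hs_eq c (hes' c (Sym2.mem_mk_left c d)) with rfl | rfl <;>
    rcases hs_eq d (hes' d (Sym2.mem_mk_right c d)) with rfl | rfl
  all_goals simp_all [Sym2.eq_swap]

end SimpleGraph

namespace Matrix

variable {ι n : Type*}

def supportGraph (A : Matrix n n ℝ) : SimpleGraph n :=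
  SimpleGraph.fromRel fun j k => A j k ≠ 0

theorem supportGraph_adj {A : Matrix n n ℝ} {j k : n} :
    (supportGraph A).Adj j k ↔ j ≠ k ∧ (A j k ≠ 0 ∨ A k j ≠ 0) :=
  SimpleGraph.fromRel_adj _ _ _

section NonnegFactor

variable [Fintype ι] {B : Matrix ι n ℝ} (hB : ∀ i j, 0 ≤ B i j)
include hB

theorem transpose_mul_self_apply_pos {i : ι} {j k : n} (hj : 0 < B i j) (hk : 0 < B i k) :
    0 < (Bᵀ * B) j k :=
  Finset.sum_pos' (fun i _ => mul_nonneg (hB i j) (hB i k))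
    ⟨i, Finset.mem_univ i, mul_pos hj hk⟩

theorem exists_pos_of_transpose_mul_self_apply_ne_zero {j k : n} (h : (Bᵀ * B) j k ≠ 0) :
    ∃ i, 0 < B i j ∧ 0 < B i k := by
  obtain ⟨i, -, hi⟩ := Finset.exists_ne_zero_of_sum_ne_zero h
  exact ⟨i, (hB i j).lt_of_ne (left_ne_zero_of_mul hi).symm,
    (hB i k).lt_of_ne (right_ne_zero_of_mul hi).symm⟩

theorem isClique_supportGraph_setOf_pos (i : ι) :
    (supportGraph (Bᵀ * B)).IsClique {j | 0 < B i j} := fun _ hj _ hk hjk =>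
  supportGraph_adj.mpr ⟨hjk, .inl (transpose_mul_self_apply_pos hB hj hk).ne'⟩

theorem exists_row_pos_of_mem_edgeSet {e : Sym2 n} (he : e ∈ (supportGraph (Bᵀ * B)).edgeSet) :
    ∃ i, ∀ v ∈ e, 0 < B i v := by
  induction e with | h j k => ?_
  obtain ⟨-, hjk | hkj⟩ := supportGraph_adj.mp he
  · obtain ⟨i, hj, hk⟩ := exists_pos_of_transpose_mul_self_apply_ne_zero hB hjk
    exact ⟨i, by simp [hj, hk]⟩
  · obtain ⟨i, hk, hj⟩ := exists_pos_of_transpose_mul_self_apply_ne_zero hB hkj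
    exact ⟨i, by simp [hj, hk]⟩

theorem ncard_edgeSet_supportGraph_le (hG : (supportGraph (Bᵀ * B)).CliqueFree 3) :
    (supportGraph (Bᵀ * B)).edgeSet.ncard ≤ Fintype.card ι := by
  choose row hrow using fun e : (supportGraph (Bᵀ * B)).edgeSet =>
    exists_row_pos_of_mem_edgeSet hB e.2
  rw [← Nat.card_coe_set_eq, ← Nat.card_eq_fintype_card]
  refine Nat.card_le_card_of_injective row fun e e' hee' => Subtype.ext ?_
  refine hG.edge_eq_of_subset_isClique (isClique_supportGraph_setOf_pos hB (row e)) e.2 e'.2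
    (hrow e) ?_
  rw [hee']
  exact hrow e'

end NonnegFactor

variable [Fintype n]

theorem IsCP.posSemidef {A : Matrix n n ℝ} (hA : A.IsCP) : A.PosSemidef := by
  obtain ⟨m, B, -, rfl⟩ := hA
  simpa [conjTranspose_eq_transpose_of_trivial] using posSemidef_conjTranspose_mul_self B

theorem IsCP.nonneg {A : Matrix n n ℝ} (hA : A.IsCP) (j k : n) : 0 ≤ A j k := by
  obtain ⟨m, B, hB, rfl⟩ := hA
  rw [mul_apply]
  exact Finset.sum_nonneg fun i _ => mul_nonneg (hB i j) (hB i k)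

theorem cpRank_le {A : Matrix n n ℝ} {m : ℕ} {B : Matrix (Fin m) n ℝ}
    (hB : ∀ i j, 0 ≤ B i j) (hA : A = Bᵀ * B) : A.cpRank ≤ m :=
  Nat.sInf_le ⟨B, hB, hA⟩

theorem ncard_edgeSet_supportGraph_le_cpRank {A : Matrix n n ℝ} (hA : A.IsCP)
    (hG : (supportGraph A).CliqueFree 3) : (supportGraph A).edgeSet.ncard ≤ A.cpRank := by
  obtain ⟨m, B, hB, hAB⟩ := hA
  refine le_csInf ⟨m, B, hB, hAB⟩ fun k ⟨C, hC, hAC⟩ => ?_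
  rw [hAC] at hG ⊢
  simpa using ncard_edgeSet_supportGraph_le hC hG

end Matrix

abbrev k23 : SimpleGraph (Fin 5) := SimpleGraph.fromRel fun j k => j < 2 ∧ 2 ≤ k

theorem k23_colorable : k23.Colorable 2 :=
  ⟨SimpleGraph.Coloring.mk (fun j => if j < 2 then 0 else 1) (by decide)⟩

theorem ncard_edgeSet_k23 : k23.edgeSet.ncard = 6 := by
  rw [← SimpleGraph.coe_edgeFinset, Set.ncard_coe_finset]
  decide

def cpExample : Matrix (Fin 5) (Fin 5) ℝ :=
  !![3,0,1,1,1; 0,6,1,1,2; 1,1,2,0,0; 1,1,0,2,0; 1,2,0,0,2]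

-- The rows are the paper's vectors `v_i`, one supported on each edge of `K_{2,3}`.
def cpExampleFactor : Matrix (Fin 6) (Fin 5) ℝ :=
  !![1,0,1,0,0; 1,0,0,1,0; 1,0,0,0,1; 0,1,1,0,0; 0,1,0,1,0; 0,2,0,0,1]

theorem cpExampleFactor_nonneg (i : Fin 6) (j : Fin 5) : 0 ≤ cpExampleFactor i j := by
  fin_cases i <;> fin_cases j <;> norm_num [cpExampleFactor]

theorem cpExample_eq_transpose_mul_self :
    cpExample = cpExampleFactorᵀ * cpExampleFactor := by
  ext i j
  fin_cases i <;> fin_cases j <;>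
    norm_num [cpExample, cpExampleFactor, mul_apply, Fin.sum_univ_succ]

theorem isCP_cpExample : cpExample.IsCP :=
  ⟨6, cpExampleFactor, cpExampleFactor_nonneg, cpExample_eq_transpose_mul_self⟩

theorem det_cpExample : cpExample.det = 4 := by
  simp [cpExample, det_succ_row_zero, Fin.sum_univ_succ, Fin.succAbove]
  norm_num

theorem supportGraph_cpExample : cpExample.supportGraph = k23 := by
  ext j k
  fin_cases j <;> fin_cases k <;> simp [supportGraph_adj, cpExample]

theorem stmt_17 :
    let A : Matrix (Fin 5) (Fin 5) ℝ :=
      !![3,0,1,1,1; 0,6,1,1,2; 1,1,2,0,0; 1,1,0,2,0; 1,2,0,0,2]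
    (∀ i j, 0 ≤ A i j) ∧ A.PosSemidef ∧ A.det = 4 ∧ A.rank = 5 ∧
      A.IsCP ∧ A.cpRank = 6 := by
  intro A
  have hA : A = cpExample := rfl
  rw [hA]
  have hunit : IsUnit cpExample := by
    rw [isUnit_iff_isUnit_det, det_cpExample]
    norm_num
  have hlower := ncard_edgeSet_supportGraph_le_cpRank isCP_cpExample
    (supportGraph_cpExample ▸ k23_colorable.cliqueFree (by norm_num))
  rw [supportGraph_cpExample, ncard_edgeSet_k23] at hlower
  refine ⟨isCP_cpExample.nonneg, isCP_cpExample.posSemidef, det_cpExample,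
    by simpa using rank_of_isUnit _ hunit, isCP_cpExample, ?_⟩
  exact le_antisymm (cpRank_le cpExampleFactor_nonneg cpExample_eq_transpose_mul_self) hlower
end
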